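/- arXiv:2105.01208 — 2 statements merged into one kernel-verified Lean document; each statement's English description precedes it below -/
import Mathlib

section
/- Let C be a Z_4-submodule of Z_4^n generated by a set S of codewords such that every element of S has Euclidean weight divisible by 8 and any two elements of S (including an element with itself) are orthogonal over Z_4. Then every codeword of C has Euclidean weight divisible by 8. -/
open Finset

def nCount {n : ℕ} (x : Fin n → ZMod 4) (a : ZMod 4) : ℕ :=
  (Finset.univ.filter (fun i => x i = a)).card

def wtE {n : ℕ} (x : Fin n → ZMod 4) : ℕ :=
  nCount x 1 + 4 * nCount x 2 + nCount x 3

def z4inner {n : ℕ} (x y : Fin n → ZMod 4) : ZMod 4 :=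
  ∑ i : Fin n, x i * y i

/-- natural-number weight of a single symbol -/
def wg (a : ZMod 4) : ℕ :=
  (if a = 1 then 1 else 0) + 4 * (if a = 2 then 1 else 0) + (if a = 3 then 1 else 0)

lemma wtE_eq_sum {n : ℕ} (x : Fin n → ZMod 4) : wtE x = ∑ i, wg (x i) := by
  unfold wtE nCount wg
  rw [Finset.sum_add_distrib, Finset.sum_add_distrib, ← Finset.mul_sum]
  congr 1
  · congr 1
    · rw [Finset.card_filter]
    · rw [Finset.card_filter]
  · rw [Finset.card_filter]

lemma wg_cast' : ∀ a : ZMod 4, ((wg a : ZMod 8)) = ((a.val : ZMod 8))^2 := by decide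

lemma wg_cast (a : ZMod 4) : ((wg a : ZMod 8)) = ((a.val : ZMod 8))^2 := wg_cast' a

lemma wtE_cast {n : ℕ} (x : Fin n → ZMod 4) :
    ((wtE x : ZMod 8)) = ∑ i, ((x i).val : ZMod 8)^2 := by
  rw [wtE_eq_sum, Nat.cast_sum]
  exact Finset.sum_congr rfl fun i _ => wg_cast (x i)

lemma key_add' : ∀ a b : ZMod 4,
    (((a + b).val : ZMod 8))^2
      = ((a.val : ZMod 8))^2 + ((b.val : ZMod 8))^2 + 2 * ((a * b).val : ZMod 8) := by
  decide

lemma key_add (a b : ZMod 4) :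
    (((a + b).val : ZMod 8))^2
      = ((a.val : ZMod 8))^2 + ((b.val : ZMod 8))^2 + 2 * ((a * b).val : ZMod 8) :=
  key_add' a b

lemma key_smul' : ∀ r a : ZMod 4,
    (((r * a).val : ZMod 8))^2 = ((r.val : ZMod 8))^2 * ((a.val : ZMod 8))^2 := by
  decide

lemma key_smul (r a : ZMod 4) :
    (((r * a).val : ZMod 8))^2 = ((r.val : ZMod 8))^2 * ((a.val : ZMod 8))^2 :=
  key_smul' r a

/-- doubling map ZMod 4 → ZMod 8 is additive -/
lemma dbl_add' : ∀ a b : ZMod 4,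
    (2 : ZMod 8) * ((a + b).val : ZMod 8) = 2 * (a.val : ZMod 8) + 2 * (b.val : ZMod 8) := by
  decide

lemma dbl_add (a b : ZMod 4) :
    (2 : ZMod 8) * ((a + b).val : ZMod 8) = 2 * (a.val : ZMod 8) + 2 * (b.val : ZMod 8) :=
  dbl_add' a b

lemma dbl_sum {n : ℕ} (f : Fin n → ZMod 4) :
    (2 : ZMod 8) * (((∑ i, f i).val : ZMod 8)) = ∑ i, 2 * ((f i).val : ZMod 8) := by
  induction n with
  | zero => simp
  | succ m ih =>
      rw [Fin.sum_univ_succ, Fin.sum_univ_succ, dbl_add, ih (fun i => f i.succ)]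

lemma z4inner_add_left {n : ℕ} (x y z : Fin n → ZMod 4) :
    z4inner (x + y) z = z4inner x z + z4inner y z := by
  unfold z4inner
  rw [← Finset.sum_add_distrib]
  exact Finset.sum_congr rfl fun i _ => by simp [add_mul]

lemma z4inner_smul_left {n : ℕ} (r : ZMod 4) (x z : Fin n → ZMod 4) :
    z4inner (r • x) z = r * z4inner x z := by
  unfold z4inner
  rw [Finset.mul_sum]
  exact Finset.sum_congr rfl fun i _ => by simp [mul_assoc]

lemma z4inner_comm {n : ℕ} (x y : Fin n → ZMod 4) : z4inner x y = z4inner y x := by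
  unfold z4inner
  exact Finset.sum_congr rfl fun i _ => mul_comm _ _

lemma orth_all {n : ℕ} (S : Set (Fin n → ZMod 4))
    (horth : ∀ s ∈ S, ∀ t ∈ S, z4inner s t = 0) :
    ∀ c ∈ Submodule.span (ZMod 4) S, ∀ s ∈ S, z4inner c s = 0 := by
  intro c hc
  induction hc using Submodule.span_induction with
  | mem x hx => exact horth x hx
  | zero => intro s hs; unfold z4inner; simp
  | add x y hx hy ihx ihy =>
      intro s hs
      rw [z4inner_add_left, ihx s hs, ihy s hs, add_zero]
  | smul r x hx ihx =>
      intro s hs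
      rw [z4inner_smul_left, ihx s hs, mul_zero]

lemma orth_span {n : ℕ} (S : Set (Fin n → ZMod 4))
    (horth : ∀ s ∈ S, ∀ t ∈ S, z4inner s t = 0) :
    ∀ c ∈ Submodule.span (ZMod 4) S, ∀ d ∈ Submodule.span (ZMod 4) S,
      z4inner c d = 0 := by
  intro c hc d hd
  induction hc using Submodule.span_induction with
  | mem x hx =>
      rw [z4inner_comm]
      exact orth_all S horth d hd x hx
  | zero => unfold z4inner; simp
  | add x y hx hy ihx ihy => rw [z4inner_add_left, ihx, ihy, add_zero]
  | smul r x hx ihx => rw [z4inner_smul_left, ihx, mul_zero]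

lemma wtE_zero {n : ℕ} : wtE (0 : Fin n → ZMod 4) = 0 := by
  unfold wtE nCount
  simp [Finset.filter_eq_empty_iff, (by decide : (0:ZMod 4) ≠ 1),
    (by decide : (0:ZMod 4) ≠ 2), (by decide : (0:ZMod 4) ≠ 3)]

lemma eight_dvd_of_cast {m : ℕ} (h : (m : ZMod 8) = 0) : 8 ∣ m :=
  (ZMod.natCast_eq_zero_iff m 8).mp h

theorem span_euclidean_weights_div_eight {n : ℕ} (S : Set (Fin n → ZMod 4))
    (hwt : ∀ s ∈ S, 8 ∣ wtE s)
    (horth : ∀ s ∈ S, ∀ t ∈ S, z4inner s t = 0) :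
    ∀ c ∈ Submodule.span (ZMod 4) S, 8 ∣ wtE c := by
  intro c hc
  induction hc using Submodule.span_induction with
  | mem x hx => exact hwt x hx
  | zero => rw [wtE_zero]; exact Dvd.intro 0 rfl
  | add x y hx hy ihx ihy =>
      apply eight_dvd_of_cast
      have hxy : z4inner x y = 0 := orth_span S horth x hx y hy
      have : ((wtE (x + y) : ZMod 8))
          = (wtE x : ZMod 8) + (wtE y : ZMod 8) + 2 * ((z4inner x y).val : ZMod 8) := by
        rw [wtE_cast, wtE_cast, wtE_cast]
        unfold z4inner
        rw [dbl_sum (fun i => x i * y i)]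
        rw [← Finset.sum_add_distrib, ← Finset.sum_add_distrib]
        exact Finset.sum_congr rfl fun i _ => key_add (x i) (y i)
      rw [this, hxy]
      obtain ⟨a, ha⟩ := ihx
      obtain ⟨b, hb⟩ := ihy
      rw [ha, hb]
      push_cast
      simp [show (8 : ZMod 8) = 0 from by decide]
  | smul r x hx ihx =>
      apply eight_dvd_of_cast
      have : ((wtE (r • x) : ZMod 8)) = ((r.val : ZMod 8))^2 * (wtE x : ZMod 8) := by
        rw [wtE_cast, wtE_cast, Finset.mul_sum]
        exact Finset.sum_congr rfl fun i _ => key_smul r (x i)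
      rw [this]
      obtain ⟨a, ha⟩ := ihx
      rw [ha]
      push_cast
      simp [show (8 : ZMod 8) = 0 from by decide]
end

section
/- If C is a Type II Z_4-code of length n (self-dual with all Euclidean weights divisible by 8), then: (a) the torsion code C^{(2)} = {c ∈ F_2^n : 2c ∈ C} is an even binary code, (b) the residue code C^{(1)} contains the all-ones vector, and (c) n ≡ 0 (mod 8). -/
open Finset

/-- binary Hamming weight -/
def wtB {n : ℕ} (y : Fin n → ZMod 2) : ℕ :=
  (Finset.univ.filter (fun i => y i ≠ 0)).card

/-- lift of a binary vector to `Z_4` with entries in `{0,1}` -/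
def liftB {n : ℕ} (y : Fin n → ZMod 2) : Fin n → ZMod 4 :=
  fun i => (((y i).val : ℕ) : ZMod 4)

/-!
For `t ∈ 𝔽₂ⁿ` the Euclidean weight of `2t` is `4 · wt(t)`, so the Type II condition makes the
torsion code even. Since `⟨2t, y⟩ = 2 (t · (y mod 2))`, self-duality identifies the torsion code
with the binary dual of the residue code. Evenness of the torsion code says that the all-ones
vector is orthogonal to it, hence lies in the double dual, which is the residue code itself.
A codeword reducing to the all-ones vector has all entries `±1`, so its Euclidean weight is `n`.
-/
section DotProduct

variable {ι K : Type*} [Fintype ι]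

theorem dotProductBilin_isRefl [CommSemiring K] :
    LinearMap.BilinForm.IsRefl (dotProductBilin K K : LinearMap.BilinForm K (ι → K)) :=
  fun x y h => by rwa [dotProductBilin_apply_apply, dotProduct_comm] at h

theorem dotProductBilin_nondegenerate [CommSemiring K] [DecidableEq ι] :
    (dotProductBilin K K : LinearMap.BilinForm K (ι → K)).Nondegenerate := by
  refine ⟨fun x hx => funext fun i => ?_, fun y hy => funext fun i => ?_⟩
  · simpa using hx (Pi.single i 1)
  · simpa using hy (Pi.single i 1)

end DotProduct

def euclidWeight (a : ZMod 4) : ℕ := min a.val (4 - a.val) ^ 2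

theorem wtE_eq_sum_euclidWeight {n : ℕ} (x : Fin n → ZMod 4) :
    wtE x = ∑ i, euclidWeight (x i) := by
  simp only [wtE, nCount, card_filter, mul_sum, ← sum_add_distrib]
  refine sum_congr rfl fun i _ => ?_
  generalize x i = a
  revert a
  decide

def twiceLift : ZMod 2 →+ ZMod 4 where
  toFun a := 2 * a.val
  map_zero' := rfl
  map_add' := by decide

theorem twiceLift_eq_zero_iff {a : ZMod 2} : twiceLift a = 0 ↔ a = 0 := by
  revert a; decide

theorem two_smul_liftB_apply {n : ℕ} (t : Fin n → ZMod 2) (i : Fin n) :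
    ((2 : ZMod 4) • liftB t) i = twiceLift (t i) := rfl

theorem z4inner_two_smul_liftB {n : ℕ} (t : Fin n → ZMod 2) (y : Fin n → ZMod 4) :
    z4inner ((2 : ZMod 4) • liftB t) y = twiceLift (t ⬝ᵥ fun i => ((y i).val : ZMod 2)) := by
  rw [z4inner, dotProduct, map_sum]
  refine sum_congr rfl fun i _ => ?_
  rw [two_smul_liftB_apply]
  generalize t i = a; generalize y i = b
  revert a b
  decide

theorem wtE_two_smul_liftB {n : ℕ} (t : Fin n → ZMod 2) :
    wtE ((2 : ZMod 4) • liftB t) = 4 * wtB t := by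
  rw [wtE_eq_sum_euclidWeight, wtB, card_filter, mul_sum]
  refine sum_congr rfl fun i _ => ?_
  rw [two_smul_liftB_apply]
  generalize t i = a
  revert a
  decide

theorem wtE_of_forall_odd {n : ℕ} {c : Fin n → ZMod 4} (hc : ∀ i, ((c i).val : ZMod 2) = 1) :
    wtE c = n := by
  have hw : ∀ i, euclidWeight (c i) = 1 := fun i => by
    have := hc i
    generalize c i = a at this ⊢
    revert a
    decide
  simp [wtE_eq_sum_euclidWeight, hw]

theorem natCast_wtB {n : ℕ} (t : Fin n → ZMod 2) : (wtB t : ZMod 2) = ∑ i, t i := by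
  rw [wtB, card_filter, Nat.cast_sum]
  refine sum_congr rfl fun i _ => ?_
  generalize t i = a
  revert a
  decide

def residueCode {n : ℕ} (C : Submodule (ZMod 4) (Fin n → ZMod 4)) :
    Submodule (ZMod 2) (Fin n → ZMod 2) :=
  AddSubgroup.toZModSubmodule 2 <| C.toAddSubgroup.map <|
    (ZMod.castHom (by norm_num : 2 ∣ 4) (ZMod 2)).toAddMonoidHom.compLeft (Fin n)

theorem mem_residueCode {n : ℕ} {C : Submodule (ZMod 4) (Fin n → ZMod 4)} {t : Fin n → ZMod 2} :
    t ∈ residueCode C ↔ ∃ c ∈ C, ∀ i, ((c i).val : ZMod 2) = t i := by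
  simp only [residueCode, AddSubgroup.mem_toZModSubmodule, AddSubgroup.mem_map,
    Submodule.mem_toAddSubgroup, funext_iff, AddMonoidHom.compLeft_apply, Function.comp_apply,
    RingHom.toAddMonoidHom_eq_coe, AddMonoidHom.coe_coe, ZMod.castHom_apply, ZMod.cast_eq_val]

theorem two_smul_liftB_mem_iff {n : ℕ} {C : Submodule (ZMod 4) (Fin n → ZMod 4)}
    (hsd : ∀ x, x ∈ C ↔ ∀ y ∈ C, z4inner x y = 0) (t : Fin n → ZMod 2) :
    (2 : ZMod 4) • liftB t ∈ C ↔
      t ∈ LinearMap.BilinForm.orthogonal (dotProductBilin _ _) (residueCode C) := by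
  rw [hsd]
  simp only [z4inner_two_smul_liftB, twiceLift_eq_zero_iff]
  constructor
  · intro h s hs
    obtain ⟨c, hc, hcs⟩ := mem_residueCode.1 hs
    obtain rfl : (fun i => ((c i).val : ZMod 2)) = s := funext hcs
    rw [dotProductBilin_apply_apply, dotProduct_comm]
    exact h c hc
  · intro h y hy
    rw [dotProduct_comm]
    exact h _ (mem_residueCode.2 ⟨y, hy, fun _ => rfl⟩)

theorem typeII_properties {n : ℕ} (C : Submodule (ZMod 4) (Fin n → ZMod 4))
    (hsd : ∀ x, x ∈ C ↔ ∀ y ∈ C, z4inner x y = 0)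
    (hII : ∀ c ∈ C, 8 ∣ wtE c) :
    (∀ t : Fin n → ZMod 2, (2 : ZMod 4) • liftB t ∈ C → Even (wtB t)) ∧
    (∃ c ∈ C, ∀ i, (((c i).val : ℕ) : ZMod 2) = 1) ∧
    8 ∣ n := by
  have torsion_even (t : Fin n → ZMod 2) (ht : (2 : ZMod 4) • liftB t ∈ C) : Even (wtB t) :=
    even_iff_two_dvd.2 <| Nat.dvd_of_mul_dvd_mul_left (by norm_num : 0 < 4) <| by
      simpa [wtE_two_smul_liftB] using hII _ ht
  have one_mem : (1 : Fin n → ZMod 2) ∈ residueCode C := by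
    rw [← LinearMap.BilinForm.orthogonal_orthogonal dotProductBilin_nondegenerate
      dotProductBilin_isRefl (residueCode C)]
    intro t ht
    change t ⬝ᵥ 1 = 0
    rw [dotProduct_one, ← natCast_wtB, ZMod.natCast_eq_zero_iff_even]
    exact torsion_even t ((two_smul_liftB_mem_iff hsd t).2 ht)
  obtain ⟨c, hc, hc_odd⟩ := mem_residueCode.1 one_mem
  refine ⟨torsion_even, ⟨c, hc, hc_odd⟩, ?_⟩
  simpa [wtE_of_forall_odd hc_odd] using hII c hc
end
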